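/- arXiv:1308.0881 — 6 statements merged into one kernel-verified Lean document; each statement's English description precedes it below -/
import Mathlib

section
/- Let z, s ∈ ℝ with s ≠ −1. If u is a finite complex Borel measure on ℝ such that for every test function φ ∈ C_c^∞(ℝ) one has ∫_ℝ ( −(p − z)·φ'(p) − (s+1)·φ(p) ) du(p) = 0, then u = 0. -/
open MeasureTheory Metric Filter Set Topology

private lemma fuchsian_const_of_deriv_zero {H : ℝ → ℂ}
    (hH : ∀ x ∈ Set.Ioi (0:ℝ), HasDerivAt H 0 x) {a b : ℝ} (ha : 0 < a) (hb : 0 < b) :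
    H a = H b := by
  wlog hab : a ≤ b generalizing a b
  · exact (this hb ha (le_of_not_ge hab)).symm
  have key := constant_of_has_deriv_right_zero (f := H) (a := a) (b := b)
    (fun x hx => (hH x (lt_of_lt_of_le ha hx.1)).continuousAt.continuousWithinAt)
    (fun x hx => (hH x (lt_of_lt_of_le ha hx.1)).hasDerivWithinAt)
  exact (key b ⟨hab, le_rfl⟩).symm

private lemma fuchsian_key (z s : ℝ) (hs : s ≠ -1)
    (ν : Measure ℝ) [IsFiniteMeasure ν] (g : ℝ → ℂ) (hg : Integrable g ν)
    (hker : ∀ φ : ℝ → ℝ, ContDiff ℝ (⊤ : ℕ∞) φ → HasCompactSupport φ →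
      ∫ p, ((-(p - z) * deriv φ p - (s + 1) * φ p : ℝ) : ℂ) * g p ∂ν = 0)
    (φ : ℝ → ℝ) (hφ : ContDiff ℝ (⊤ : ℕ∞) φ) (hφc : HasCompactSupport φ) :
    ∫ p, (φ (p - z) : ℂ) * g p ∂ν = 0 := by
  set dφ := deriv φ with hdφ_def
  have hφcont : Continuous φ := hφ.continuous
  have hdφcont : Continuous dφ := hφ.continuous_deriv (by exact_mod_cast le_top)
  have hdiff : Differentiable ℝ φ := hφ.differentiable (by simp)
  have hdφc : HasCompactSupport dφ := hφc.deriv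
  obtain ⟨K, hK⟩ := hφcont.bounded_above_of_compact_support hφc
  obtain ⟨K', hK'⟩ := hdφcont.bounded_above_of_compact_support hdφc
  have hK'0 : 0 ≤ K' := le_trans (norm_nonneg _) (hK' 0)
  obtain ⟨R₀, hR₀⟩ : ∃ R₀, tsupport dφ ⊆ closedBall 0 R₀ :=
    hdφc.isBounded.subset_closedBall 0
  set R := max R₀ 0 with hR_def
  have hR : tsupport dφ ⊆ closedBall 0 R :=
    hR₀.trans (closedBall_subset_closedBall (le_max_left _ _))
  have hR0 : 0 ≤ R := le_max_right _ _
  set F : ℝ → ℝ → ℂ := fun l p => (φ (l * (p - z)) : ℂ) * g p with hF_def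
  set F' : ℝ → ℝ → ℂ := fun l p => ((dφ (l * (p - z)) * (p - z) : ℝ) : ℂ) * g p with hF'_def
  set G : ℝ → ℂ := fun l => ∫ p, F l p ∂ν with hG_def
  -- integrability
  have hFint : ∀ l, Integrable (F l) ν := by
    intro l
    refine hg.bdd_mul (c := K) ?_ (ae_of_all _ fun p => by simpa using hK (l * (p - z)))
    exact (Complex.continuous_ofReal.comp (hφcont.comp (by fun_prop))).aestronglyMeasurable
  have hbd : ∀ l : ℝ, l ≠ 0 → ∀ p : ℝ, |dφ (l * (p - z)) * (p - z)| ≤ K' * R / |l| := by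
    intro l hl p
    rcases eq_or_ne (dφ (l * (p - z))) 0 with h | h
    · rw [h, zero_mul, abs_zero]
      positivity
    · have hmem := hR (subset_tsupport dφ h)
      simp only [mem_closedBall, Real.dist_eq, sub_zero] at hmem
      have hlp : |p - z| ≤ R / |l| := by
        rw [le_div_iff₀ (abs_pos.mpr hl), mul_comm]
        calc |l| * |p - z| = |l * (p - z)| := (abs_mul _ _).symm
        _ ≤ R := hmem
      rw [abs_mul, mul_div_assoc]
      exact mul_le_mul (hK' _) hlp (abs_nonneg _) hK'0
  have hF'cont : ∀ l : ℝ, AEStronglyMeasurable (F' l) ν := by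
    intro l
    refine AEStronglyMeasurable.mul ?_ hg.1
    exact (Complex.continuous_ofReal.comp
      ((hdφcont.comp (by fun_prop)).mul (by fun_prop))).aestronglyMeasurable
  have hF'int : ∀ l : ℝ, l ≠ 0 → Integrable (F' l) ν := by
    intro l hl
    exact hg.bdd_mul (c := K' * R / |l|) (by
      exact (Complex.continuous_ofReal.comp
        ((hdφcont.comp (by fun_prop)).mul (by fun_prop))).aestronglyMeasurable)
      (ae_of_all _ fun p => by rw [Complex.norm_real, Real.norm_eq_abs]; exact hbd l hl p)
  -- derivative of G
  have hG : ∀ l ∈ Ioi (0:ℝ), HasDerivAt G (∫ p, F' l p ∂ν) l := by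
    intro l hl
    have hl0 : (0:ℝ) < l := hl
    have := hasDerivAt_integral_of_dominated_loc_of_deriv_le (μ := ν)
      (F := F) (F' := F') (x₀ := l) (s := ball l (l/2))
      (bound := fun p => (K' * R / (l/2)) * ‖g p‖)
      (ball_mem_nhds l (by positivity))
      (Eventually.of_forall fun x => (hFint x).1)
      (hFint l) (hF'cont l)
      (ae_of_all _ fun p x hx => ?_)
      (hg.norm.const_mul _)
      (ae_of_all _ fun p x hx => ?_)
    · exact this.2
    · -- bound
      have hx2 : l/2 < x := by
        have := abs_lt.1 (by simpa [Real.dist_eq] using hx)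
        linarith [this.1]
      have hxpos : (0:ℝ) < x := by linarith
      have h1 : ‖F' x p‖ = |dφ (x * (p - z)) * (p - z)| * ‖g p‖ := by
        rw [hF'_def]
        rw [norm_mul, Complex.norm_real, Real.norm_eq_abs]
      rw [h1]
      refine mul_le_mul_of_nonneg_right ?_ (norm_nonneg _)
      refine (hbd x hxpos.ne' p).trans ?_
      rw [abs_of_pos hxpos]
      exact div_le_div_of_nonneg_left (by positivity) (by positivity) hx2.le
    · -- differentiability
      have hinner : HasDerivAt (fun y : ℝ => y * (p - z)) (p - z) x :=
        hasDerivAt_mul_const (p - z)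
      have hφat : HasDerivAt φ (dφ (x * (p - z))) (x * (p - z)) :=
        (hdiff (x * (p - z))).hasDerivAt
      have := (hφat.comp x hinner).ofReal_comp.mul_const (g p)
      simpa [hF_def, hF'_def, Function.comp] using this
  -- the ODE from the kernel condition
  have hode : ∀ l ∈ Ioi (0:ℝ), (l:ℂ) * (∫ p, F' l p ∂ν) + ((s:ℂ)+1) * G l = 0 := by
    intro l hl
    have hl0 : (0:ℝ) < l := hl
    have hcd : ContDiff ℝ (⊤ : ℕ∞) (fun p => φ (l * (p - z))) :=
      hφ.comp (by fun_prop)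
    have hcs : HasCompactSupport (fun p => φ (l * (p - z))) := by
      have := hφc.comp_homeomorph
        ((Homeomorph.subRight z).trans (Homeomorph.mulLeft₀ l hl0.ne'))
      exact this
    have hder : ∀ p : ℝ, deriv (fun p => φ (l * (p - z))) p = dφ (l * (p - z)) * l := by
      intro p
      have hinner : HasDerivAt (fun p : ℝ => l * (p - z)) l p := by
        simpa using ((hasDerivAt_id p).sub_const z).const_mul l
      have hφat : HasDerivAt φ (dφ (l * (p - z))) (l * (p - z)) :=
        (hdiff (l * (p - z))).hasDerivAt
      exact (hφat.comp p hinner).deriv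
    have h0 := hker _ hcd hcs
    have heq : ∀ p : ℝ, ((-(p - z) * deriv (fun p => φ (l * (p - z))) p
          - (s + 1) * (φ (l * (p - z))) : ℝ) : ℂ) * g p
        = -((l:ℂ) * F' l p) - ((s:ℂ)+1) * F l p := by
      intro p
      rw [hder p]
      simp only [hF_def, hF'_def]
      push_cast
      ring
    rw [integral_congr_ae (ae_of_all _ heq)] at h0
    have hint1 : Integrable (fun p => -((l:ℂ) * F' l p)) ν :=
      ((hF'int l hl0.ne').const_mul _).neg
    have hint2 : Integrable (fun p => ((s:ℂ)+1) * F l p) ν := (hFint l).const_mul _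
    rw [integral_sub hint1 hint2, integral_neg, integral_const_mul, integral_const_mul] at h0
    simp only [hG_def]
    linear_combination -h0
  -- H := l^{s+1} G l has zero derivative on Ioi 0
  have hH : ∀ l ∈ Ioi (0:ℝ), HasDerivAt (fun x : ℝ => ((x ^ (s+1) : ℝ) : ℂ) * G x) 0 l := by
    intro l hl
    have hl0 : (0:ℝ) < l := hl
    have h1 : HasDerivAt (fun x : ℝ => x ^ (s+1)) ((s+1) * l ^ s) l := by
      have := Real.hasDerivAt_rpow_const (x := l) (p := s+1) (Or.inl hl0.ne')
      simpa using this
    have h2 := (h1.ofReal_comp).mul (hG l hl)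
    have hodel := hode l hl
    refine h2.congr_deriv ?_
    have hlpow : ((l ^ (s+1) : ℝ) : ℂ) = ((l ^ s : ℝ) : ℂ) * (l : ℂ) := by
      rw [Real.rpow_add hl0, Real.rpow_one]; push_cast; ring
    rw [hlpow]
    push_cast
    linear_combination ((l ^ s : ℝ) : ℂ) * hodel
  have hconst : ∀ l ∈ Ioi (0:ℝ), ((l ^ (s+1) : ℝ) : ℂ) * G l = G 1 := by
    intro l hl
    have := fuchsian_const_of_deriv_zero hH hl one_pos
    simpa [Real.one_rpow] using this
  set C := K * ∫ p, ‖g p‖ ∂ν with hC_def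
  have hGb : ∀ l : ℝ, ‖G l‖ ≤ C := by
    intro l
    calc ‖G l‖ ≤ ∫ p, ‖F l p‖ ∂ν := norm_integral_le_integral_norm _
    _ ≤ ∫ p, K * ‖g p‖ ∂ν := by
        refine integral_mono (hFint l).norm (hg.norm.const_mul K) fun p => ?_
        rw [hF_def]
        rw [norm_mul, Complex.norm_real]
        exact mul_le_mul_of_nonneg_right (hK _) (norm_nonneg _)
    _ = C := by rw [hC_def, integral_const_mul]
  have hC0 : 0 ≤ C := le_trans (norm_nonneg _) (hGb 0)
  have hG1b : ∀ l ∈ Ioi (0:ℝ), ‖G 1‖ ≤ l ^ (s+1) * C := by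
    intro l hl
    have hl0 : (0:ℝ) < l := hl
    rw [← hconst l hl, norm_mul, Complex.norm_real, Real.norm_eq_abs,
      abs_of_nonneg (Real.rpow_nonneg hl0.le _)]
    exact mul_le_mul_of_nonneg_left (hGb l) (Real.rpow_nonneg hl0.le _)
  have hG1 : ‖G 1‖ ≤ 0 := by
    have hs1 : s + 1 ≠ 0 := fun h => hs (by linarith)
    rcases hs1.lt_or_gt with hneg | hpos
    · have ht : Tendsto (fun l : ℝ => l ^ (s+1) * C) atTop (𝓝 0) := by
        have := (tendsto_rpow_neg_atTop (y := -(s+1)) (by linarith)).mul_const C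
        simpa using this
      exact ge_of_tendsto ht ((eventually_gt_atTop 0).mono fun l hl => hG1b l hl)
    · have ht : Tendsto (fun l : ℝ => l ^ (s+1) * C) (𝓝[>] (0:ℝ)) (𝓝 0) := by
        have h1 : ContinuousAt (fun x : ℝ => x ^ (s+1)) 0 :=
          Real.continuousAt_rpow_const 0 (s+1) (Or.inr hpos.le)
        have h2 : Tendsto (fun x : ℝ => x ^ (s+1) * C) (𝓝[>] (0:ℝ)) (𝓝 ((0:ℝ) ^ (s+1) * C)) :=
          (h1.tendsto.mono_left nhdsWithin_le_nhds).mul_const C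
        simpa [Real.zero_rpow hs1] using h2
      exact ge_of_tendsto ht (eventually_nhdsWithin_of_forall fun l hl => hG1b l hl)
  have hfin : G 1 = 0 := norm_le_zero_iff.mp hG1
  rw [hG_def, hF_def] at hfin
  simpa using hfin

/-- the operator `L_{z,s} u = (p−z)∂_p u − s·u`, defined on finite complex Borel
measures by duality `⟨L_{z,s}u, φ⟩ = ∫ (−(p−z)φ'(p) − (s+1)φ(p)) du(p)`, has trivial kernel
when `s ≠ −1`.

A finite complex Borel measure `u` on `ℝ` is encoded (via its polar/Radon–Nikodym
decomposition) as `u = g·ν` with `ν` a finite positive Borel measure and `g` a `ν`-integrable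
complex density; `u = 0` means `∫_A g dν = 0` for every Borel set `A`. -/
theorem fuchsian_trivial_kernel_on_measures (z s : ℝ) (hs : s ≠ -1)
    (ν : Measure ℝ) [IsFiniteMeasure ν] (g : ℝ → ℂ) (hg : Integrable g ν)
    (hker : ∀ φ : ℝ → ℝ, ContDiff ℝ (⊤ : ℕ∞) φ → HasCompactSupport φ →
      ∫ p, ((-(p - z) * deriv φ p - (s + 1) * φ p : ℝ) : ℂ) * g p ∂ν = 0) :
    ∀ A : Set ℝ, MeasurableSet A → ∫ p in A, g p ∂ν = 0 := by
  have hae : ∀ᵐ p ∂ν, g p = 0 := by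
    apply ae_eq_zero_of_integral_contDiff_smul_eq_zero hg.locallyIntegrable
    intro ψ hψ hψc
    have key := fuchsian_key z s hs ν g hg hker (fun q => ψ (q + z))
      (hψ.comp (by fun_prop)) (hψc.comp_homeomorph (Homeomorph.addRight z))
    simp only [sub_add_cancel] at key
    simpa [Complex.real_smul] using key
  intro A hA
  exact integral_eq_zero_of_ae (ae_restrict_of_ae hae)
end

section
/- Let n, r, s, t ∈ ℝ and let f : ℝ → ℂ be three times differentiable. Define Qg(p) := (p−n)·g'(p) and Pg(p) := p·g'(p). Then, as functions of p: (Q+r)(Q+s)(P+t)f = (P+t+2)(Q+r−1)(Q+s−1)f + (2t − r − s + 3)·Qf + ( t·(r+s−1) − 2·(r−1)·(s−1) )·f, where (Q+a) denotes the operator g ↦ Qg + a·g and products denote composition. -/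
/-- The Fuchsian operator `Q g (p) = (p - n) * g'(p)`. -/
noncomputable def Qop (n : ℝ) (g : ℝ → ℂ) : ℝ → ℂ := fun p => ((p : ℂ) - (n : ℂ)) * deriv g p

/-- The Fuchsian operator `P g (p) = p * g'(p)`. -/
noncomputable def Pop (g : ℝ → ℂ) : ℝ → ℂ := fun p => (p : ℂ) * deriv g p

/-- The shifted operator `(Q + a) g := Q g + a • g`. -/
noncomputable def QS (n a : ℝ) (g : ℝ → ℂ) : ℝ → ℂ := fun p => Qop n g p + (a : ℂ) * g p

/-- The shifted operator `(P + a) g := P g + a • g`. -/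
noncomputable def PS (a : ℝ) (g : ℝ → ℂ) : ℝ → ℂ := fun p => Pop g p + (a : ℂ) * g p

lemma hasDerivAt_coe (p : ℝ) : HasDerivAt (fun x : ℝ => (x : ℂ)) 1 p := by
  simpa using (hasDerivAt_id p).ofReal_comp

/-- the third-order rearrangement identity
`(Q+r)(Q+s)(P+t) = (P+t+2)(Q+r−1)(Q+s−1) + (2t−r−s+3)·Q + (t(r+s−1) − 2(r−1)(s−1))·id`
for the Fuchsian operators `Q = (p−n)∂_p`, `P = p∂_p`, applied to a three times differentiable
function `f : ℝ → ℂ`. -/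
theorem third_order_rearrange (n r s t : ℝ) (f : ℝ → ℂ)
    (hf : Differentiable ℝ f) (hf' : Differentiable ℝ (deriv f))
    (hf'' : Differentiable ℝ (deriv (deriv f))) (p : ℝ) :
    QS n r (QS n s (PS t f)) p
      = PS (t + 2) (QS n (r - 1) (QS n (s - 1) f)) p
        + ((2 * t - r - s + 3 : ℝ) : ℂ) * Qop n f p
        + ((t * (r + s - 1) - 2 * (r - 1) * (s - 1) : ℝ) : ℂ) * f p := by
  have e1 : PS t f = fun q : ℝ => (q : ℂ) * deriv f q + (t : ℂ) * f q := by
    funext q; simp [PS, Pop]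
  have d1 : ∀ q : ℝ, HasDerivAt (PS t f)
      (((1 : ℂ) + t) * deriv f q + q * deriv (deriv f) q) q := by
    intro q; rw [e1]
    have h := ((hasDerivAt_coe q).mul ((hf' q).hasDerivAt)).add
      (((hf q).hasDerivAt).const_mul (t : ℂ))
    exact h.congr_deriv (by ring)
  have e2 : QS n s (PS t f) = fun q : ℝ =>
      ((q : ℂ) - n) * (((1 : ℂ) + t) * deriv f q + q * deriv (deriv f) q)
        + (s : ℂ) * ((q : ℂ) * deriv f q + (t : ℂ) * f q) := by
    funext q
    simp only [QS, Qop]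
    rw [(d1 q).deriv, e1]
  have d2 : HasDerivAt (QS n s (PS t f))
      (((1 : ℂ) + t) * deriv f p + p * deriv (deriv f) p
        + ((p : ℂ) - n) * (((2 : ℂ) + t) * deriv (deriv f) p + p * deriv (deriv (deriv f)) p)
        + (s : ℂ) * (((1 : ℂ) + t) * deriv f p + p * deriv (deriv f) p)) p := by
    rw [e2]
    have h := (((hasDerivAt_coe p).sub_const (n : ℂ)).mul
        ((((hf' p).hasDerivAt).const_mul ((1 : ℂ) + t)).add
          ((hasDerivAt_coe p).mul ((hf'' p).hasDerivAt)))).add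
      ((((hasDerivAt_coe p).mul ((hf' p).hasDerivAt)).add
        (((hf p).hasDerivAt).const_mul (t : ℂ))).const_mul (s : ℂ))
    exact h.congr_deriv (by simp only [Pi.add_apply, Pi.mul_apply]; ring)
  have e3 : QS n (s - 1) f = fun q : ℝ =>
      ((q : ℂ) - n) * deriv f q + ((s : ℂ) - 1) * f q := by
    funext q; simp only [QS, Qop]; push_cast; ring
  have d3 : ∀ q : ℝ, HasDerivAt (QS n (s - 1) f)
      (deriv f q + ((q : ℂ) - n) * deriv (deriv f) q + ((s : ℂ) - 1) * deriv f q) q := by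
    intro q; rw [e3]
    have h := (((hasDerivAt_coe q).sub_const (n : ℂ)).mul ((hf' q).hasDerivAt)).add
      (((hf q).hasDerivAt).const_mul ((s : ℂ) - 1))
    exact h.congr_deriv (by ring)
  have e4 : QS n (r - 1) (QS n (s - 1) f) = fun q : ℝ =>
      ((q : ℂ) - n) * (deriv f q + ((q : ℂ) - n) * deriv (deriv f) q + ((s : ℂ) - 1) * deriv f q)
        + ((r : ℂ) - 1) * (((q : ℂ) - n) * deriv f q + ((s : ℂ) - 1) * f q) := by
    funext q
    simp only [QS, Qop]
    rw [(d3 q).deriv]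
    push_cast; ring
  have d4 : HasDerivAt (QS n (r - 1) (QS n (s - 1) f))
      ((deriv f p + ((p : ℂ) - n) * deriv (deriv f) p + ((s : ℂ) - 1) * deriv f p)
        + ((p : ℂ) - n) * (((2 : ℂ) + ((s : ℂ) - 1)) * deriv (deriv f) p
            + ((p : ℂ) - n) * deriv (deriv (deriv f)) p)
        + ((r : ℂ) - 1) * (deriv f p + ((p : ℂ) - n) * deriv (deriv f) p
            + ((s : ℂ) - 1) * deriv f p)) p := by
    rw [e4]
    have hA := (((hf' p).hasDerivAt).add
        (((hasDerivAt_coe p).sub_const (n : ℂ)).mul ((hf'' p).hasDerivAt))).add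
      (((hf' p).hasDerivAt).const_mul ((s : ℂ) - 1))
    have hB := (((hasDerivAt_coe p).sub_const (n : ℂ)).mul ((hf' p).hasDerivAt)).add
      (((hf p).hasDerivAt).const_mul ((s : ℂ) - 1))
    have h := (((hasDerivAt_coe p).sub_const (n : ℂ)).mul hA).add (hB.const_mul ((r : ℂ) - 1))
    exact h.congr_deriv (by simp only [Pi.add_apply, Pi.mul_apply]; ring)
  have lhs : QS n r (QS n s (PS t f)) p
      = ((p : ℂ) - n) * deriv (QS n s (PS t f)) p + (r : ℂ) * QS n s (PS t f) p := rfl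
  have rhs : PS (t + 2) (QS n (r - 1) (QS n (s - 1) f)) p
      = (p : ℂ) * deriv (QS n (r - 1) (QS n (s - 1) f)) p
        + ((t + 2 : ℝ) : ℂ) * QS n (r - 1) (QS n (s - 1) f) p := rfl
  rw [lhs, rhs, d2.deriv, d4.deriv, e2, e4]
  simp only [Qop]
  push_cast
  ring
end

section
/- Let μ ∈ ℝ. For a three times differentiable function φ : ℝ → ℂ define B₀φ(p) := −d/dp(p·φ(p)) and Bφ(p) := −d/dp(p·φ(p)) + 2μ·φ(p). Then B₀(B(Bφ))(0) = −(2μ−1)²·φ(0). Equivalently, the Dirac measure δ₀ satisfies (P+2μ)(P+2μ)P δ₀ = −(2μ−1)²·δ₀ in the sense of distributions, where P u = p·∂_p u. -/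
/-- The formal adjoint `B₀ φ (p) = −d/dp (p·φ(p))` of the Fuchsian operator `P = p∂_p`. -/
noncomputable def B0 (φ : ℝ → ℂ) : ℝ → ℂ := fun p => -deriv (fun q : ℝ => (q : ℂ) * φ q) p

/-- The formal adjoint `B φ (p) = −d/dp (p·φ(p)) + 2μ·φ(p)` of `P + 2μ`. -/
noncomputable def Bμ (μ : ℝ) (φ : ℝ → ℂ) : ℝ → ℂ := fun p => B0 φ p + 2 * (μ : ℂ) * φ p

lemma deriv_mul_ofReal (g : ℝ → ℂ) {p : ℝ} (hg : DifferentiableAt ℝ g p) :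
    deriv (fun q : ℝ => (q : ℂ) * g q) p = g p + p * deriv g p := by
  have h1 : HasDerivAt (fun q : ℝ => (q : ℂ)) 1 p := by
    simpa using (hasDerivAt_id p).ofReal_comp
  have := (h1.mul hg.hasDerivAt).deriv
  simp only [one_mul] at this
  exact this

lemma Bmu_eq (μ : ℝ) (φ : ℝ → ℂ) (hφ : Differentiable ℝ φ) :
    Bμ μ φ = fun p : ℝ => (2 * (μ : ℂ) - 1) * φ p - p * deriv φ p := by
  funext p
  simp only [Bμ, B0, deriv_mul_ofReal φ (hφ p)]
  ring

lemma diff_expr (μ : ℝ) (φ : ℝ → ℂ) (hφ : Differentiable ℝ φ)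
    (hφ' : Differentiable ℝ (deriv φ)) :
    Differentiable ℝ (fun p : ℝ => (2 * (μ : ℂ) - 1) * φ p - p * deriv φ p) :=
  ((differentiable_const _).mul hφ).sub (Complex.ofRealCLM.differentiable.mul hφ')

/-- for three times differentiable `φ : ℝ → ℂ`,
`B₀(B(Bφ))(0) = −(2μ−1)²·φ(0)`; equivalently `(P+2μ)(P+2μ)P δ₀ = −(2μ−1)²·δ₀`
in the sense of distributions, where `P u = p·∂_p u`. -/
theorem Ln_zero_mode_on_delta (μ : ℝ) (φ : ℝ → ℂ)
    (hφ : Differentiable ℝ φ) (hφ' : Differentiable ℝ (deriv φ))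
    (hφ'' : Differentiable ℝ (deriv (deriv φ))) :
    B0 (Bμ μ (Bμ μ φ)) 0 = -((2 * (μ : ℂ) - 1)) ^ 2 * φ 0 := by
  set ψ := Bμ μ φ with hψdef
  have hψeq : ψ = fun p : ℝ => (2 * (μ : ℂ) - 1) * φ p - p * deriv φ p :=
    Bmu_eq μ φ hφ
  have hψ : Differentiable ℝ ψ := hψeq ▸ diff_expr μ φ hφ hφ'
  have hψ'eq : deriv ψ = fun p : ℝ =>
      (2 * (μ : ℂ) - 1) * deriv φ p - (deriv φ p + p * deriv (deriv φ) p) := by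
    funext p
    rw [hψeq]
    have h1 : HasDerivAt (fun q : ℝ => (2 * (μ : ℂ) - 1) * φ q)
        ((2 * (μ : ℂ) - 1) * deriv φ p) p := (hφ p).hasDerivAt.const_mul _
    have h2 : HasDerivAt (fun q : ℝ => (q : ℂ) * deriv φ q)
        (deriv φ p + p * deriv (deriv φ) p) p := by
      have hr : HasDerivAt (fun q : ℝ => (q : ℂ)) 1 p := by
        simpa using (hasDerivAt_id p).ofReal_comp
      have := hr.mul (hφ' p).hasDerivAt
      simp only [one_mul] at this
      exact this
    exact (h1.sub h2).deriv
  have hψ' : Differentiable ℝ (deriv ψ) := by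
    rw [hψ'eq]
    exact ((differentiable_const _).mul hφ').sub
      (hφ'.add (Complex.ofRealCLM.differentiable.mul hφ''))
  have hχeq : Bμ μ ψ = fun p : ℝ => (2 * (μ : ℂ) - 1) * ψ p - p * deriv ψ p :=
    Bmu_eq μ ψ hψ
  have hχ : Differentiable ℝ (Bμ μ ψ) := hχeq ▸ diff_expr μ ψ hψ hψ'
  have hB0 : B0 (Bμ μ ψ) 0 = -(Bμ μ ψ 0) := by
    simp [B0, deriv_mul_ofReal (Bμ μ ψ) (hχ 0)]
  rw [hB0, hχeq]
  simp only [Complex.ofReal_zero, zero_mul, sub_zero]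
  rw [hψeq]
  simp only [Complex.ofReal_zero, zero_mul, sub_zero]
  ring
end

section
/- Let μ ∈ (1/2, ∞), c > 0, r₀ > 0 and θ₀ ∈ ℝ. Define v : ℝ²∖{0} → ℝ² by v(x) = c·|x|^{−1/μ}·x^⊥ with x^⊥ = (−x₂, x₁), and define the curve x : ℝ → ℝ² by x(τ) = r(τ)·(cos θ(τ), sin θ(τ)) with r(τ) = r₀·e^{−μτ} and θ(τ) = θ₀ + c·r₀^{−1/μ}·(e^{τ} − 1). Then: (a) x'(τ) = v(x(τ)) − μ·x(τ) for all τ ∈ ℝ; and (b) with β₀ := θ₀ − c·r₀^{−1/μ}, one has |x(τ)| = c^{μ}·(θ(τ) − β₀)^{−μ} for all τ ∈ ℝ. -/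
/-- the pseudo-streamlines of the radial background field
`v(x) = c·|x|^{−1/μ}·x^⊥` are algebraic spirals.  The curve
`x(τ) = r(τ)·(cos θ(τ), sin θ(τ))` with `r(τ) = r₀·e^{−μτ}` and
`θ(τ) = θ₀ + c·r₀^{−1/μ}·(e^τ − 1)` satisfies (a) `x'(τ) = v(x(τ)) − μ·x(τ)`,
and (b) `|x(τ)| = c^μ·(θ(τ) − β₀)^{−μ}` where `β₀ = θ₀ − c·r₀^{−1/μ}`. -/
theorem pseudo_streamlines_algebraic_spirals (μ c r₀ θ₀ : ℝ)
    (hμ : 1 / 2 < μ) (hc : 0 < c) (hr₀ : 0 < r₀)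
    (r θ : ℝ → ℝ)
    (hr : r = fun τ => r₀ * Real.exp (-μ * τ))
    (hθ : θ = fun τ => θ₀ + c * r₀ ^ (-(1 : ℝ) / μ) * (Real.exp τ - 1))
    (x : ℝ → ℝ × ℝ)
    (hx : x = fun τ => (r τ * Real.cos (θ τ), r τ * Real.sin (θ τ)))
    (v : ℝ × ℝ → ℝ × ℝ)
    (hv : v = fun y =>
      (-(c * Real.sqrt (y.1 ^ 2 + y.2 ^ 2) ^ (-(1 : ℝ) / μ) * y.2),
        c * Real.sqrt (y.1 ^ 2 + y.2 ^ 2) ^ (-(1 : ℝ) / μ) * y.1)) :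
    (∀ τ : ℝ, HasDerivAt x (v (x τ) - μ • x τ) τ) ∧
    (∀ τ : ℝ, Real.sqrt ((x τ).1 ^ 2 + (x τ).2 ^ 2)
        = c ^ μ * (θ τ - (θ₀ - c * r₀ ^ (-(1 : ℝ) / μ))) ^ (-μ)) := by
  have hμ0 : 0 < μ := lt_trans (by norm_num) hμ
  set p : ℝ := -(1:ℝ)/μ with hp
  have hrpos : ∀ τ, 0 < r τ := by
    intro τ; rw [hr]; positivity
  have hnorm : ∀ τ, Real.sqrt ((x τ).1 ^ 2 + (x τ).2 ^ 2) = r τ := by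
    intro τ
    have h1 : (x τ).1 ^ 2 + (x τ).2 ^ 2 = (r τ) ^ 2 := by
      simp only [hx]
      nlinarith [Real.sin_sq_add_cos_sq (θ τ)]
    rw [h1, Real.sqrt_sq (hrpos τ).le]
  have hkey : ∀ τ, (r τ) ^ p = r₀ ^ p * Real.exp τ := by
    intro τ
    rw [hr]
    rw [Real.mul_rpow hr₀.le (Real.exp_pos _).le, ← Real.exp_mul]
    rw [hp]
    field_simp
  have hθd : ∀ τ, HasDerivAt θ (c * r₀ ^ p * Real.exp τ) τ := by
    intro τ
    rw [hθ]
    have := (((Real.hasDerivAt_exp τ).sub_const 1).const_mul (c * r₀ ^ p)).const_add θ₀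
    simpa using this
  have hrd : ∀ τ, HasDerivAt r (-μ * r τ) τ := by
    intro τ
    rw [hr]
    have h1 : HasDerivAt (fun τ : ℝ => -μ * τ) (-μ) τ := by
      simpa using (hasDerivAt_id τ).const_mul (-μ)
    have h2 := (Real.hasDerivAt_exp (-μ * τ)).comp τ h1
    have h3 := h2.const_mul r₀
    refine h3.congr_deriv ?_
    beta_reduce
    ring
  constructor
  · intro τ
    have hc1 : HasDerivAt (fun τ => r τ * Real.cos (θ τ))
        (-μ * r τ * Real.cos (θ τ) + r τ * (-Real.sin (θ τ) * (c * r₀ ^ p * Real.exp τ))) τ :=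
      (hrd τ).mul ((hθd τ).cos)
    have hc2 : HasDerivAt (fun τ => r τ * Real.sin (θ τ))
        (-μ * r τ * Real.sin (θ τ) + r τ * (Real.cos (θ τ) * (c * r₀ ^ p * Real.exp τ))) τ :=
      (hrd τ).mul ((hθd τ).sin)
    have hpair := hc1.prodMk hc2
    have hs : Real.sqrt ((r τ * Real.cos (θ τ)) ^ 2 + (r τ * Real.sin (θ τ)) ^ 2) = r τ := by
      have h := hnorm τ
      simp only [hx] at h
      exact h
    rw [hx, hv]
    convert hpair using 1
    simp only [hs, Prod.smul_mk, smul_eq_mul, Prod.mk_sub_mk, Prod.mk.injEq, hkey τ]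
    constructor <;> ring
  · intro τ
    rw [hnorm τ, hθ]
    have h1 : (θ₀ + c * r₀ ^ p * (Real.exp τ - 1)) - (θ₀ - c * r₀ ^ p)
        = c * (r τ) ^ p := by rw [hkey τ]; ring
    rw [h1, Real.mul_rpow hc.le (Real.rpow_nonneg (hrpos τ).le p),
      ← Real.rpow_mul (hrpos τ).le,
      show p * -μ = 1 by rw [hp]; field_simp,
      Real.rpow_one, ← mul_assoc, ← Real.rpow_add hc]
    norm_num
end

section
/- Let μ ∈ ℝ with μ ≠ 1/2. For β > 0 define γ(β) := (2πβ)^{1−2μ} ∈ ℝ and z(β) := (2πβ)^{−μ}·e^{iβ} ∈ ℂ. Then γ'(β) ≠ 0 for all β > 0, and for all β > 0: (1−2μ)·γ(β)·( z'(β)/γ'(β) ) + μ·z(β) = conj( γ(β) / (2πi·z(β)) ), where conj denotes complex conjugation. -/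
/-- the algebraic spiral `z(β) = (2πβ)^{−μ}·e^{iβ}` with circulation parameter
`γ(β) = (2πβ)^{1−2μ}` solves the point-vortex approximation
`(1−2μ)·γ·z_γ + μ·z = ( γ/(2πi·z) )^*` of the self-similar Birkhoff–Rott equation,
where `z_γ = z'(β)/γ'(β)` and `*` is complex conjugation. -/
theorem kaden_spiral_solves_point_vortex (μ : ℝ) (hμ : μ ≠ 1 / 2)
    (γ : ℝ → ℝ) (hγ : γ = fun β => (2 * Real.pi * β) ^ (1 - 2 * μ))
    (z : ℝ → ℂ) (hz : z = fun β : ℝ =>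
      (((2 * Real.pi * β) ^ (-μ) : ℝ) : ℂ) * Complex.exp (Complex.I * (β : ℂ))) :
    ∀ β : ℝ, 0 < β →
      deriv γ β ≠ 0 ∧
      ((1 - 2 * μ : ℝ) : ℂ) * (γ β : ℂ) * (deriv z β / ((deriv γ β : ℝ) : ℂ))
          + (μ : ℂ) * z β
        = starRingEnd ℂ ((γ β : ℂ) / (2 * (Real.pi : ℂ) * Complex.I * z β)) := by
  intro β hβ
  have hb : (0:ℝ) < 2 * Real.pi * β := by positivity
  have hμ' : (1 - 2*μ : ℝ) ≠ 0 := by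
    intro h; apply hμ; linarith
  have h1 : HasDerivAt (fun β : ℝ => 2 * Real.pi * β) (2 * Real.pi) β := by
    simpa using (hasDerivAt_id β).const_mul (2 * Real.pi)
  -- derivative of γ
  have hγd : HasDerivAt γ ((1 - 2*μ) * (2*Real.pi*β) ^ (-(2*μ)) * (2*Real.pi)) β := by
    rw [hγ]
    have h2 := (Real.hasDerivAt_rpow_const (x := 2*Real.pi*β) (p := 1 - 2*μ)
      (Or.inl hb.ne')).comp β h1
    rw [show (1 - 2*μ) - 1 = -(2*μ) by ring] at h2
    exact h2
  -- derivative of z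
  have h3 : HasDerivAt (fun β : ℝ => (((2 * Real.pi * β) ^ (-μ) : ℝ) : ℂ))
      ((((-μ) * (2*Real.pi*β) ^ (-μ - 1) * (2*Real.pi) : ℝ)) : ℂ) β := by
    have := (Real.hasDerivAt_rpow_const (x := 2*Real.pi*β) (p := -μ)
      (Or.inl hb.ne')).comp β h1
    exact this.ofReal_comp
  have h4 : HasDerivAt (fun β : ℝ => Complex.exp (Complex.I * (β:ℂ)))
      (Complex.I * Complex.exp (Complex.I * (β:ℂ))) β := by
    have hin : HasDerivAt (fun w : ℂ => Complex.I * w) Complex.I ((β:ℂ)) := by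
      simpa using (hasDerivAt_id ((β:ℂ))).const_mul Complex.I
    have := (Complex.hasDerivAt_exp (Complex.I * (β:ℂ))).comp ((β:ℂ)) hin
    simpa [mul_comm] using this.comp_ofReal
  have hzd : HasDerivAt z
      ((((-μ) * (2*Real.pi*β) ^ (-μ - 1) * (2*Real.pi) : ℝ) : ℂ) * Complex.exp (Complex.I * (β:ℂ))
        + (((2 * Real.pi * β) ^ (-μ) : ℝ) : ℂ) * (Complex.I * Complex.exp (Complex.I * (β:ℂ)))) β := by
    rw [hz]
    exact h3.mul h4
  have hγpos : (0:ℝ) < (2*Real.pi*β) ^ (-(2*μ)) := Real.rpow_pos_of_pos hb _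
  have hdγ : deriv γ β = (1 - 2*μ) * (2*Real.pi*β) ^ (-(2*μ)) * (2*Real.pi) := hγd.deriv
  have hdγne : deriv γ β ≠ 0 := by
    rw [hdγ]
    have : (0:ℝ) < 2*Real.pi := by positivity
    exact mul_ne_zero (mul_ne_zero hμ' hγpos.ne') this.ne'
  refine ⟨hdγne, ?_⟩
  rw [hdγ, hzd.deriv, hγ, hz]
  beta_reduce
  -- abbreviations
  have hapos : (0:ℝ) < (2*Real.pi*β) ^ (-μ) := Real.rpow_pos_of_pos hb _
  set a : ℝ := (2*Real.pi*β) ^ (-μ) with ha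
  -- rpow identities
  have e1 : (2*Real.pi*β) ^ (1 - 2*μ) = (2*Real.pi*β) * a^2 := by
    rw [ha, show (1 - 2*μ) = 1 + ((-μ) + (-μ)) by ring, Real.rpow_add hb, Real.rpow_add hb,
      Real.rpow_one]; ring
  have e2 : (2*Real.pi*β) ^ (-(2*μ)) = a^2 := by
    rw [ha, show (-(2*μ)) = (-μ) + (-μ) by ring, Real.rpow_add hb]; ring
  have e3 : (2*Real.pi*β) ^ (-μ - 1) = a / (2*Real.pi*β) := by
    rw [ha, show (-μ - 1) = (-μ) + (-1) by ring, Real.rpow_add hb, Real.rpow_neg_one]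
    ring
  rw [e1, e2, e3]
  -- complex exponential facts
  set E : ℂ := Complex.exp (Complex.I * (β:ℂ)) with hE
  have hEne : E ≠ 0 := Complex.exp_ne_zero _
  have hconjE : (starRingEnd ℂ) E = E⁻¹ := by
    rw [hE, ← Complex.exp_conj, ← Complex.exp_neg]
    congr 1
    simp
  have hane : (a:ℂ) ≠ 0 := by exact_mod_cast hapos.ne'
  have hπne : ((Real.pi:ℝ):ℂ) ≠ 0 := by exact_mod_cast Real.pi_ne_zero
  have hμc : ((1 - 2*μ : ℝ):ℂ) ≠ 0 := by exact_mod_cast hμ'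
  have hbc : ((2*Real.pi*β : ℝ):ℂ) ≠ 0 := by exact_mod_cast hb.ne'
  push_cast
  simp only [map_div₀, map_mul, map_pow, map_ofNat, Complex.conj_ofReal, Complex.conj_I, hconjE]
  have hI : (Complex.I)^2 = -1 := Complex.I_sq
  have hβc : (β:ℂ) ≠ 0 := by exact_mod_cast hβ.ne'
  have hμc2 : (1 - 2*(μ:ℂ)) ≠ 0 := by exact_mod_cast hμc
  have hden : (2 * (Real.pi:ℂ) * -Complex.I * ((a:ℂ) * E⁻¹)) ≠ 0 := by
    apply mul_ne_zero
    · apply mul_ne_zero (mul_ne_zero two_ne_zero hπne)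
      simp
    · exact mul_ne_zero hane (inv_ne_zero hEne)
  have hDne : ((1 - 2 * (μ:ℂ)) * (a:ℂ) ^ 2 * (2 * (Real.pi:ℂ))) ≠ 0 :=
    mul_ne_zero (mul_ne_zero hμc2 (pow_ne_zero 2 hane)) (mul_ne_zero two_ne_zero hπne)
  rw [← mul_div_assoc, div_add' _ _ _ hDne, div_eq_div_iff hDne hden]
  field_simp
  linear_combination -(β:ℂ) * hI
end

section
/- Let χ, φ ∈ C_c^∞(ℝ²) with φ(0) = 0, and for δ > 0 define χ_δ(x) := χ(x/δ). Then for every q ∈ [1, 2): ‖∇(χ_δ·φ)‖_{L^q(ℝ²)} → 0 and ‖∇²(χ_δ·φ)‖_{L^q(ℝ²)} → 0 as δ → 0⁺, where ∇² denotes the Hessian matrix and the L^q norm of a matrix-valued function is taken entrywise (or with any fixed matrix norm). -/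
open MeasureTheory Filter Metric Set

private lemma norm_fderiv_eq_itfd {F : Type*} [NormedAddCommGroup F]
    [NormedSpace ℝ F] (f : ℝ × ℝ → F) (x : ℝ × ℝ) :
    ‖fderiv ℝ f x‖ = ‖iteratedFDeriv ℝ 1 f x‖ := by
  rw [← norm_iteratedFDeriv_fderiv, norm_iteratedFDeriv_zero]

private lemma eLpNorm_le_of_bound {F : Type*} [NormedAddCommGroup F]
    (f : ℝ × ℝ → F) (q C r : ℝ) (hq : 1 ≤ q) (hC : 0 ≤ C) (hr : 0 ≤ r)
    (hb : ∀ x ∈ closedBall (0 : ℝ × ℝ) r, ‖f x‖ ≤ C)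
    (h0 : ∀ x ∉ closedBall (0 : ℝ × ℝ) r, f x = 0) :
    eLpNorm f (ENNReal.ofReal q) volume
      ≤ ENNReal.ofReal (C * ((2 * r) ^ 2) ^ (1 / q)) := by
  have hq0 : (0:ℝ) < q := lt_of_lt_of_le one_pos hq
  have hp0 : ENNReal.ofReal q ≠ 0 := by simp [ENNReal.ofReal_eq_zero, not_le, hq0]
  have hbi : ∀ x, ‖f x‖ ≤ (closedBall (0 : ℝ × ℝ) r).indicator (fun _ => C) x := by
    intro x
    by_cases hx : x ∈ closedBall (0 : ℝ × ℝ) r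
    · simpa [Set.indicator_of_mem hx] using hb x hx
    · simp [Set.indicator_of_notMem hx, h0 x hx]
  refine le_trans (eLpNorm_mono_real hbi) ?_
  rw [eLpNorm_indicator_const measurableSet_closedBall hp0 ENNReal.ofReal_ne_top]
  have hvol : volume (closedBall (0 : ℝ × ℝ) r) = ENNReal.ofReal ((2 * r) ^ 2) := by
    rw [show (0 : ℝ × ℝ) = ((0:ℝ), (0:ℝ)) from rfl, ← closedBall_prod_same,
      Measure.volume_eq_prod, Measure.prod_prod, Real.volume_closedBall,
      ← ENNReal.ofReal_mul (by linarith), sq]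
  rw [hvol, ENNReal.toReal_ofReal hq0.le,
    ENNReal.ofReal_rpow_of_nonneg (sq_nonneg _) (by positivity),
    ENNReal.ofReal_mul hC, Real.enorm_eq_ofReal hC]

private lemma itfd_comp_smul_le (χ : ℝ × ℝ → ℝ) (hχ : ContDiff ℝ (⊤ : ℕ∞) χ)
    {δ : ℝ} (hδ : 0 < δ) (i : ℕ) (x : ℝ × ℝ) {M : ℝ}
    (hM : ∀ y, ‖iteratedFDeriv ℝ i χ y‖ ≤ M) :
    ‖iteratedFDeriv ℝ i (fun y : ℝ × ℝ => χ (δ⁻¹ • y)) x‖ ≤ M * δ⁻¹ ^ i := by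
  set L : (ℝ × ℝ) →L[ℝ] (ℝ × ℝ) := δ⁻¹ • ContinuousLinearMap.id ℝ (ℝ × ℝ) with hLdef
  have hfun : (fun y : ℝ × ℝ => χ (δ⁻¹ • y)) = χ ∘ L := by
    funext y; simp [hLdef]
  rw [hfun, L.iteratedFDeriv_comp_right hχ x (by exact_mod_cast le_top)]
  refine le_trans (ContinuousMultilinearMap.norm_compContinuousLinearMap_le _ _) ?_
  have hLn : ‖L‖ ≤ δ⁻¹ := by
    refine ContinuousLinearMap.opNorm_le_bound L (inv_pos.mpr hδ).le fun y => ?_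
    simp [hLdef, norm_smul, abs_of_pos hδ]
  rw [Finset.prod_const, Finset.card_univ, Fintype.card_fin]
  have h1 := hM (L x)
  have h2 : ‖L‖ ^ i ≤ δ⁻¹ ^ i := pow_le_pow_left₀ (norm_nonneg _) hLn i
  exact mul_le_mul h1 h2 (pow_nonneg (norm_nonneg _) i) ((norm_nonneg _).trans h1)

private lemma rpow_helper {R : ℝ} (hR : 0 < R) {q : ℝ} (hq : 0 < q) {δ : ℝ} (hδ : 0 < δ) :
    ((2 * (R * δ)) ^ 2) ^ (1 / q) = ((2 * R) ^ 2) ^ (1 / q) * δ ^ (2 / q) := by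
  have h1 : (2 * (R * δ)) ^ 2 = ((2 * R) ^ 2) * δ ^ (2:ℕ) := by ring
  rw [h1, Real.mul_rpow (by positivity) (by positivity), ← Real.rpow_natCast δ 2,
    ← Real.rpow_mul hδ.le]
  norm_num [div_eq_mul_inv]

private lemma tendsto_ofReal_rpow (K : ℝ) {a : ℝ} (ha : 0 < a) :
    Tendsto (fun δ : ℝ => ENNReal.ofReal (K * δ ^ a))
      (nhdsWithin 0 (Set.Ioi 0)) (nhds 0) := by
  have h1 : Tendsto (fun δ : ℝ => δ ^ a) (nhdsWithin 0 (Set.Ioi 0)) (nhds 0) := by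
    have h := (Real.continuousAt_rpow_const 0 a (Or.inr ha.le)).tendsto
    rw [Real.zero_rpow ha.ne'] at h
    exact h.mono_left nhdsWithin_le_nhds
  have h2 : Tendsto (fun δ : ℝ => K * δ ^ a) (nhdsWithin 0 (Set.Ioi 0)) (nhds 0) := by
    simpa using h1.const_mul K
  simpa using ENNReal.tendsto_ofReal h2

private lemma deriv_bounds (χ φ : ℝ × ℝ → ℝ)
    (hχ : ContDiff ℝ (⊤ : ℕ∞) χ) (hχc : HasCompactSupport χ)
    (hφ : ContDiff ℝ (⊤ : ℕ∞) φ) (hφc : HasCompactSupport φ)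
    (hφ0 : φ 0 = 0) :
    ∃ R K : ℝ, 0 < R ∧ 0 ≤ K ∧ ∀ δ, δ ∈ Set.Ioc (0:ℝ) 1 →
      (∀ x : ℝ × ℝ, x ∉ closedBall 0 (R * δ) →
          x ∉ tsupport (fun y : ℝ × ℝ => χ (δ⁻¹ • y) * φ y)) ∧
      (∀ x ∈ closedBall (0:ℝ×ℝ) (R * δ),
          ‖iteratedFDeriv ℝ 1 (fun y : ℝ × ℝ => χ (δ⁻¹ • y) * φ y) x‖ ≤ K) ∧
      (∀ x ∈ closedBall (0:ℝ×ℝ) (R * δ),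
          ‖iteratedFDeriv ℝ 2 (fun y : ℝ × ℝ => χ (δ⁻¹ • y) * φ y) x‖ ≤ K * δ⁻¹) := by
  obtain ⟨R, hR, hRs⟩ := hχc.isBounded.subset_closedBall_lt 0 0
  have hbd : ∀ f : ℝ × ℝ → ℝ, ContDiff ℝ (⊤ : ℕ∞) f → HasCompactSupport f →
      ∃ M : ℝ, 0 ≤ M ∧ ∀ i : ℕ, i ≤ 2 → ∀ y, ‖iteratedFDeriv ℝ i f y‖ ≤ M := by
    intro f hf hfc
    have hcont : ∀ i : ℕ, Continuous (iteratedFDeriv ℝ i f) :=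
      fun i => hf.continuous_iteratedFDeriv (by exact_mod_cast le_top)
    obtain ⟨M0, h0⟩ := (hfc.iteratedFDeriv 0).exists_bound_of_continuous (hcont 0)
    obtain ⟨M1, h1⟩ := (hfc.iteratedFDeriv 1).exists_bound_of_continuous (hcont 1)
    obtain ⟨M2, h2⟩ := (hfc.iteratedFDeriv 2).exists_bound_of_continuous (hcont 2)
    refine ⟨max (max M0 M1) (max M2 0), le_trans (le_max_right _ _) (le_max_right _ _),
      fun i hi y => ?_⟩
    interval_cases i
    · exact (h0 y).trans (le_trans (le_max_left _ _) (le_max_left _ _))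
    · exact (h1 y).trans (le_trans (le_max_right _ _) (le_max_left _ _))
    · exact (h2 y).trans (le_trans (le_max_left _ _) (le_max_right _ _))
  obtain ⟨Mχ, hMχ0, hMχ⟩ := hbd χ hχ hχc
  obtain ⟨Mφ, hMφ0, hMφ⟩ := hbd φ hφ hφc
  set B := max Mχ Mφ with hBdef
  have hB : 0 ≤ B := le_trans hMχ0 (le_max_left _ _)
  have hBχ : ∀ i : ℕ, i ≤ 2 → ∀ y, ‖iteratedFDeriv ℝ i χ y‖ ≤ B :=
    fun i hi y => (hMχ i hi y).trans (le_max_left _ _)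
  have hBφ : ∀ i : ℕ, i ≤ 2 → ∀ y, ‖iteratedFDeriv ℝ i φ y‖ ≤ B :=
    fun i hi y => (hMφ i hi y).trans (le_max_right _ _)
  have hφlip : ∀ x : ℝ × ℝ, ‖φ x‖ ≤ B * ‖x‖ := by
    intro x
    have hder : ∀ y ∈ (Set.univ : Set (ℝ × ℝ)), DifferentiableAt ℝ φ y :=
      fun y _ => (hφ.differentiable (by simp)).differentiableAt
    have hbound : ∀ y ∈ (Set.univ : Set (ℝ × ℝ)), ‖fderiv ℝ φ y‖ ≤ B := fun y _ => by
      rw [norm_fderiv_eq_itfd]; exact hBφ 1 (by norm_num) y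
    have := convex_univ.norm_image_sub_le_of_norm_fderiv_le hder hbound
      (Set.mem_univ (0 : ℝ × ℝ)) (Set.mem_univ x)
    simpa [hφ0] using this
  refine ⟨R, B * B * (3 + R), hR, by positivity, ?_⟩
  rintro δ ⟨hδ0, hδ1⟩
  have hδinv : (0:ℝ) < δ⁻¹ := inv_pos.mpr hδ0
  have hinv : δ⁻¹ * δ = 1 := inv_mul_cancel₀ hδ0.ne'
  have hinv1 : (1:ℝ) ≤ δ⁻¹ := one_le_inv_iff₀.mpr ⟨hδ0, hδ1⟩
  have hψeq : (fun y : ℝ × ℝ => χ (δ⁻¹ • y))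
      = χ ∘ (δ⁻¹ • ContinuousLinearMap.id ℝ (ℝ × ℝ)) := funext fun y => by simp
  have hψ : ContDiff ℝ (⊤ : ℕ∞) (fun y : ℝ × ℝ => χ (δ⁻¹ • y)) := by
    rw [hψeq]; exact hχ.comp (ContinuousLinearMap.contDiff _)
  have hts : tsupport (fun y : ℝ × ℝ => χ (δ⁻¹ • y) * φ y) ⊆ closedBall 0 (R * δ) := by
    refine closure_minimal ?_ isClosed_closedBall
    intro x hx
    have hne : χ (δ⁻¹ • x) ≠ 0 := left_ne_zero_of_mul hx
    have hmem : δ⁻¹ • x ∈ tsupport χ := subset_closure (by exact hne)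
    have h2 := hRs hmem
    rw [mem_closedBall_zero_iff] at h2 ⊢
    rw [norm_smul, Real.norm_eq_abs, abs_of_pos hδinv] at h2
    calc ‖x‖ = δ * (δ⁻¹ * ‖x‖) := by field_simp
      _ ≤ δ * R := mul_le_mul_of_nonneg_left h2 hδ0.le
      _ = R * δ := mul_comm _ _
  have key : ∀ x ∈ closedBall (0:ℝ×ℝ) (R * δ),
      ‖iteratedFDeriv ℝ 0 (fun y : ℝ × ℝ => χ (δ⁻¹ • y)) x‖ ≤ B ∧
      ‖iteratedFDeriv ℝ 1 (fun y : ℝ × ℝ => χ (δ⁻¹ • y)) x‖ ≤ B * δ⁻¹ ∧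
      ‖iteratedFDeriv ℝ 2 (fun y : ℝ × ℝ => χ (δ⁻¹ • y)) x‖ ≤ B * δ⁻¹ ^ 2 ∧
      ‖iteratedFDeriv ℝ 0 φ x‖ ≤ B * (R * δ) ∧
      ‖iteratedFDeriv ℝ 1 φ x‖ ≤ B ∧ ‖iteratedFDeriv ℝ 2 φ x‖ ≤ B := by
    intro x hx
    have hx' : ‖x‖ ≤ R * δ := mem_closedBall_zero_iff.mp hx
    refine ⟨?_, ?_, ?_, ?_, hBφ 1 (by norm_num) x, hBφ 2 (by norm_num) x⟩
    · simpa using itfd_comp_smul_le χ hχ hδ0 0 x (hBχ 0 (by norm_num))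
    · simpa using itfd_comp_smul_le χ hχ hδ0 1 x (hBχ 1 (by norm_num))
    · exact itfd_comp_smul_le χ hχ hδ0 2 x (hBχ 2 (by norm_num))
    · rw [norm_iteratedFDeriv_zero]
      exact (hφlip x).trans (mul_le_mul_of_nonneg_left hx' hB)
  refine ⟨fun x hx hmem => hx (hts hmem), ?_, ?_⟩
  · -- first derivative
    intro x hx
    obtain ⟨a0, a1, a2, b0, b1, b2⟩ := key x hx
    have hmain := norm_iteratedFDeriv_mul_le (𝕜 := ℝ) hψ hφ x
      (n := 1) (by exact_mod_cast le_top)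
    rw [Finset.sum_range_succ, Finset.sum_range_succ, Finset.sum_range_zero] at hmain
    simp only [Nat.sub_zero, Nat.sub_self, Nat.choose_zero_right, Nat.choose_one_right,
      Nat.choose_self, Nat.cast_one, Nat.cast_ofNat, one_mul, zero_add,
      norm_iteratedFDeriv_zero, Real.norm_eq_abs] at hmain
    rw [norm_iteratedFDeriv_zero, Real.norm_eq_abs] at a0
    rw [norm_iteratedFDeriv_zero, Real.norm_eq_abs] at b0
    have t1 : |χ (δ⁻¹ • x)| * ‖iteratedFDeriv ℝ 1 φ x‖ ≤ B * B :=
      mul_le_mul a0 b1 (norm_nonneg _) hB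
    have t2 : ‖iteratedFDeriv ℝ 1 (fun y : ℝ × ℝ => χ (δ⁻¹ • y)) x‖
        * |φ x| ≤ B * B * R := by
      have h := mul_le_mul a1 b0 (abs_nonneg _) (by positivity)
      calc ‖iteratedFDeriv ℝ 1 (fun y : ℝ × ℝ => χ (δ⁻¹ • y)) x‖
          * |φ x| ≤ B * δ⁻¹ * (B * (R * δ)) := h
        _ = B * B * R * (δ⁻¹ * δ) := by ring
        _ = B * B * R := by rw [hinv, mul_one]
    have hmain' : ‖iteratedFDeriv ℝ 1 (fun y : ℝ × ℝ => χ (δ⁻¹ • y) * φ y) x‖ ≤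
        |χ (δ⁻¹ • x)| * ‖iteratedFDeriv ℝ 1 φ x‖ +
        ‖iteratedFDeriv ℝ 1 (fun y : ℝ × ℝ => χ (δ⁻¹ • y)) x‖
          * ‖iteratedFDeriv ℝ 0 φ x‖ := hmain
    rw [norm_iteratedFDeriv_zero, Real.norm_eq_abs] at hmain'
    have hBB : 0 ≤ B * B := mul_nonneg hB hB
    have hBBR : 0 ≤ B * B * R := by positivity
    linarith [hmain']
  · -- second derivative
    intro x hx
    obtain ⟨a0, a1, a2, b0, b1, b2⟩ := key x hx
    have hmain := norm_iteratedFDeriv_mul_le (𝕜 := ℝ) hψ hφ x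
      (n := 2) (by norm_cast)
    rw [Finset.sum_range_succ, Finset.sum_range_succ, Finset.sum_range_succ,
      Finset.sum_range_zero] at hmain
    simp only [Nat.sub_zero, Nat.sub_self, Nat.choose_zero_right, Nat.choose_one_right,
      Nat.choose_self, Nat.cast_one, Nat.cast_ofNat, one_mul, zero_add,
      norm_iteratedFDeriv_zero, Real.norm_eq_abs] at hmain
    rw [norm_iteratedFDeriv_zero, Real.norm_eq_abs] at a0
    rw [norm_iteratedFDeriv_zero, Real.norm_eq_abs] at b0
    have t1 : |χ (δ⁻¹ • x)| * ‖iteratedFDeriv ℝ 2 φ x‖ ≤ B * B * δ⁻¹ := by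
      have h := mul_le_mul a0 b2 (norm_nonneg _) hB
      have h2 : B * B * 1 ≤ B * B * δ⁻¹ :=
        mul_le_mul_of_nonneg_left hinv1 (mul_nonneg hB hB)
      linarith
    have t2 : ‖iteratedFDeriv ℝ 1 (fun y : ℝ × ℝ => χ (δ⁻¹ • y)) x‖
        * ‖iteratedFDeriv ℝ 1 φ x‖ ≤ B * B * δ⁻¹ := by
      have h := mul_le_mul a1 b1 (norm_nonneg _) (by positivity)
      calc ‖iteratedFDeriv ℝ 1 (fun y : ℝ × ℝ => χ (δ⁻¹ • y)) x‖
          * ‖iteratedFDeriv ℝ 1 φ x‖ ≤ B * δ⁻¹ * B := h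
        _ = B * B * δ⁻¹ := by ring
    have t3 : ‖iteratedFDeriv ℝ 2 (fun y : ℝ × ℝ => χ (δ⁻¹ • y)) x‖
        * |φ x| ≤ B * B * R * δ⁻¹ := by
      have h := mul_le_mul a2 b0 (abs_nonneg _) (by positivity)
      calc ‖iteratedFDeriv ℝ 2 (fun y : ℝ × ℝ => χ (δ⁻¹ • y)) x‖
          * |φ x| ≤ B * δ⁻¹ ^ 2 * (B * (R * δ)) := h
        _ = B * B * R * δ⁻¹ * (δ⁻¹ * δ) := by ring
        _ = B * B * R * δ⁻¹ := by rw [hinv, mul_one]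
    have hmain' : ‖iteratedFDeriv ℝ 2 (fun y : ℝ × ℝ => χ (δ⁻¹ • y) * φ y) x‖ ≤
        |χ (δ⁻¹ • x)| * ‖iteratedFDeriv ℝ 2 φ x‖ +
        2 * ‖iteratedFDeriv ℝ 1 (fun y : ℝ × ℝ => χ (δ⁻¹ • y)) x‖
          * ‖iteratedFDeriv ℝ 1 φ x‖ +
        ‖iteratedFDeriv ℝ 2 (fun y : ℝ × ℝ => χ (δ⁻¹ • y)) x‖
          * ‖iteratedFDeriv ℝ 0 φ x‖ := hmain
    rw [norm_iteratedFDeriv_zero, Real.norm_eq_abs] at hmain'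
    have hgoal : B * B * (3 + R) * δ⁻¹
        = B * B * δ⁻¹ + 2 * (B * B * δ⁻¹) + B * B * R * δ⁻¹ := by ring
    linarith [hmain']

/-- cutoff lemma (a point has zero capacity at integrability `q < 2`).
For `χ, φ ∈ C_c^∞(ℝ²)` with `φ(0) = 0` and `χ_δ(x) = χ(x/δ)`, the first and second
derivatives of `χ_δ·φ` tend to `0` in `L^q(ℝ²)` as `δ → 0⁺`, for every `q ∈ [1, 2)`.
The Hessian is encoded as the second Fréchet derivative, with its operator norm. -/
theorem cutoff_lemma (χ φ : ℝ × ℝ → ℝ)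
    (hχ : ContDiff ℝ (⊤ : ℕ∞) χ) (hχc : HasCompactSupport χ)
    (hφ : ContDiff ℝ (⊤ : ℕ∞) φ) (hφc : HasCompactSupport φ)
    (hφ0 : φ 0 = 0)
    (q : ℝ) (hq1 : 1 ≤ q) (hq2 : q < 2) :
    Tendsto (fun δ : ℝ =>
        eLpNorm (fun x => fderiv ℝ (fun y : ℝ × ℝ => χ (δ⁻¹ • y) * φ y) x)
          (ENNReal.ofReal q) volume)
      (nhdsWithin 0 (Set.Ioi 0)) (nhds 0) ∧
    Tendsto (fun δ : ℝ =>
        eLpNorm (fun x => fderiv ℝ (fun y : ℝ × ℝ =>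
            fderiv ℝ (fun z : ℝ × ℝ => χ (δ⁻¹ • z) * φ z) y) x)
          (ENNReal.ofReal q) volume)
      (nhdsWithin 0 (Set.Ioi 0)) (nhds 0) := by
  have hq0 : (0:ℝ) < q := lt_of_lt_of_le one_pos hq1
  obtain ⟨R, K, hR, hK, hd⟩ := deriv_bounds χ φ hχ hχc hφ hφc hφ0
  set K' : ℝ := K * ((2 * R) ^ 2) ^ (1 / q) with hK'def
  have hK' : 0 ≤ K' := by positivity
  have ha1 : (0:ℝ) < 2 / q := by positivity
  have ha2 : (0:ℝ) < 2 / q - 1 := by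
    rw [sub_pos, lt_div_iff₀ hq0]; linarith
  have hIoc : Set.Ioc (0:ℝ) 1 ∈ nhdsWithin (0:ℝ) (Set.Ioi 0) :=
    Ioc_mem_nhdsGT_of_mem ⟨le_refl 0, one_pos⟩
  constructor
  · refine tendsto_of_tendsto_of_tendsto_of_le_of_le' tendsto_const_nhds
      (tendsto_ofReal_rpow K' ha1) (Eventually.of_forall fun δ => zero_le) ?_
    filter_upwards [hIoc] with δ hδ
    obtain ⟨hsup, hb1, _⟩ := hd δ hδ
    have hle := eLpNorm_le_of_bound
      (fun x => fderiv ℝ (fun y : ℝ × ℝ => χ (δ⁻¹ • y) * φ y) x) q K (R * δ)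
      hq1 hK (mul_nonneg hR.le hδ.1.le)
      (fun x hx => by
        rw [norm_fderiv_eq_itfd]; exact hb1 x hx)
      (fun x hx => by
        by_contra hne
        exact hsup x hx (support_fderiv_subset ℝ (Function.mem_support.mpr hne)))
    refine hle.trans (ENNReal.ofReal_le_ofReal ?_)
    rw [rpow_helper hR hq0 hδ.1]
    exact le_of_eq (by rw [hK'def]; ring)
  · refine tendsto_of_tendsto_of_tendsto_of_le_of_le' tendsto_const_nhds
      (tendsto_ofReal_rpow K' ha2) (Eventually.of_forall fun δ => zero_le) ?_
    filter_upwards [hIoc] with δ hδ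
    obtain ⟨hsup, _, hb2⟩ := hd δ hδ
    have hle := eLpNorm_le_of_bound
      (fun x => fderiv ℝ (fun y : ℝ × ℝ =>
          fderiv ℝ (fun z : ℝ × ℝ => χ (δ⁻¹ • z) * φ z) y) x) q (K * δ⁻¹) (R * δ)
      hq1 (mul_nonneg hK (inv_nonneg.mpr hδ.1.le)) (mul_nonneg hR.le hδ.1.le)
      (fun x hx => by
        rw [norm_fderiv_eq_itfd, norm_iteratedFDeriv_fderiv]; exact hb2 x hx)
      (fun x hx => by
        by_contra hne
        exact hsup x hx (tsupport_fderiv_subset ℝ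
          (support_fderiv_subset ℝ (Function.mem_support.mpr hne))))
    refine hle.trans (ENNReal.ofReal_le_ofReal ?_)
    rw [rpow_helper hR hq0 hδ.1]
    have hpow : δ⁻¹ * δ ^ (2 / q) = δ ^ (2 / q - 1) := by
      rw [← Real.rpow_neg_one δ, ← Real.rpow_add hδ.1]
      congr 1; ring
    calc K * δ⁻¹ * (((2 * R) ^ 2) ^ (1 / q) * δ ^ (2 / q))
        = K * ((2 * R) ^ 2) ^ (1 / q) * (δ⁻¹ * δ ^ (2 / q)) := by ring
      _ = K' * δ ^ (2 / q - 1) := by rw [hpow, hK'def]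
      _ ≤ K' * δ ^ (2 / q - 1) := le_refl _
end
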